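/- arXiv:2405.04616 — 2 statements merged into one kernel-verified Lean document; each statement's English description precedes it below -/
import Mathlib

section
/- Every commutative pseudo-amenable Banach algebra is symmetrically pseudo-amenable. -/
open Filter Topology

universe u

/-- A realization of the projective Banach-space tensor square `A ⊗̂ A` of a (non-unital)
Banach algebra `A`, together with the canonical bimodule operations `a•t`, `t•a`, the
"opposite" operations `a∘t`, `t∘a`, the product maps `π`, `π°` and the flip map, each
characterized by its values on elementary tensors.  The norm is the projective tensor norm:
`‖a ⊗ b‖ ≤ ‖a‖‖b‖` and every element is an absolutely convergent sum of elementary tensors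
whose total norm is arbitrarily close to its norm; moreover bounded bilinear maps lift. -/
structure ProjTensorSquare (A : Type u) [NonUnitalNormedRing A] [NormedSpace ℂ A]
    [IsScalarTower ℂ A A] [SMulCommClass ℂ A A] [CompleteSpace A] where
  /-- the underlying Banach space of `A ⊗̂ A` -/
  T : Type u
  [nacg : NormedAddCommGroup T]
  [nsp : NormedSpace ℂ T]
  [cplt : CompleteSpace T]
  /-- the canonical bilinear map `(a, b) ↦ a ⊗ b` -/
  tmul : A →L[ℂ] A →L[ℂ] T
  norm_tmul_le : ∀ a b : A, ‖tmul a b‖ ≤ ‖a‖ * ‖b‖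
  /-- the projective norm property -/
  exists_rep : ∀ (t : T) (ε : ℝ), 0 < ε → ∃ u v : ℕ → A,
      Summable (fun n => ‖u n‖ * ‖v n‖) ∧ HasSum (fun n => tmul (u n) (v n)) t ∧
      ∑' n, ‖u n‖ * ‖v n‖ ≤ ‖t‖ + ε
  /-- the universal property: bounded bilinear maps into a Banach space lift to `T` -/
  lift : ∀ {X : Type u} [NormedAddCommGroup X] [NormedSpace ℂ X] [CompleteSpace X]
      (f : A →L[ℂ] A →L[ℂ] X), ∃ g : T →L[ℂ] X, (∀ a b, g (tmul a b) = f a b) ∧ ‖g‖ ≤ ‖f‖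
  /-- the left module action: `a • (b ⊗ c) = (a * b) ⊗ c` -/
  lmul : A → T →L[ℂ] T
  lmul_tmul : ∀ a b c, lmul a (tmul b c) = tmul (a * b) c
  /-- the right module action: `(b ⊗ c) • a = b ⊗ (c * a)` -/
  rmul : A → T →L[ℂ] T
  rmul_tmul : ∀ a b c, rmul a (tmul b c) = tmul b (c * a)
  /-- the left opposite action: `a ∘ (b ⊗ c) = b ⊗ (a * c)` -/
  lcirc : A → T →L[ℂ] T
  lcirc_tmul : ∀ a b c, lcirc a (tmul b c) = tmul b (a * c)
  /-- the right opposite action: `(b ⊗ c) ∘ a = (b * a) ⊗ c` -/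
  rcirc : A → T →L[ℂ] T
  rcirc_tmul : ∀ a b c, rcirc a (tmul b c) = tmul (b * a) c
  /-- the product map `π : b ⊗ c ↦ b * c` -/
  π : T →L[ℂ] A
  π_tmul : ∀ b c, π (tmul b c) = b * c
  /-- the opposite product map `π° : b ⊗ c ↦ c * b` -/
  πop : T →L[ℂ] A
  πop_tmul : ∀ b c, πop (tmul b c) = c * b
  /-- the flip map `(b ⊗ c)° = c ⊗ b` -/
  flip : T →L[ℂ] T
  flip_tmul : ∀ b c, flip (tmul b c) = tmul c b

attribute [instance] ProjTensorSquare.nacg ProjTensorSquare.nsp ProjTensorSquare.cplt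

namespace ProjTensorSquare

variable {A : Type u} [NonUnitalNormedRing A] [NormedSpace ℂ A]
    [IsScalarTower ℂ A A] [SMulCommClass ℂ A A] [CompleteSpace A]

/-- `t` is an approximate diagonal for `A` consisting of symmetric tensors, along the
filter `l`:  each `t i` is symmetric, `a • tᵢ - tᵢ • a → 0` and `π(tᵢ) a → a` for all `a`. -/
def IsSymmApproxDiagonal (P : ProjTensorSquare A) {ι : Type u} (l : Filter ι)
    (t : ι → P.T) : Prop :=
  (∀ i, P.flip (t i) = t i) ∧
  (∀ a : A, Tendsto (fun i => P.lmul a (t i) - P.rmul a (t i)) l (𝓝 0)) ∧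
  (∀ a : A, Tendsto (fun i => P.π (t i) * a) l (𝓝 a))

/-- A Banach algebra is symmetrically pseudo-amenable if it has a (not necessarily bounded)
approximate diagonal consisting of symmetric tensors. -/
def SymmPseudoAmenable (P : ProjTensorSquare A) : Prop :=
  ∃ (ι : Type u) (l : Filter ι) (t : ι → P.T), l.NeBot ∧ P.IsSymmApproxDiagonal l t

end ProjTensorSquare

/-- A Banach algebra is pseudo-amenable if it has a (not necessarily bounded) approximate
diagonal. -/
def ProjTensorSquare.PseudoAmenable {A : Type u} [NonUnitalNormedRing A] [NormedSpace ℂ A]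
    [IsScalarTower ℂ A A] [SMulCommClass ℂ A A] [CompleteSpace A]
    (P : ProjTensorSquare A) : Prop :=
  ∃ (ι : Type u) (l : Filter ι) (t : ι → P.T), l.NeBot ∧
    (∀ a : A, Tendsto (fun i => P.lmul a (t i) - P.rmul a (t i)) l (𝓝 0)) ∧
    (∀ a : A, Tendsto (fun i => P.π (t i) * a) l (𝓝 a))

section Aux

variable {A : Type u} [NonUnitalNormedRing A] [NormedSpace ℂ A]
    [IsScalarTower ℂ A A] [SMulCommClass ℂ A A] [CompleteSpace A]

/-- Continuous linear maps on `T` agreeing on elementary tensors agree everywhere. -/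
theorem ProjTensorSquare.ext_tmul (P : ProjTensorSquare A) {X : Type*}
    [NormedAddCommGroup X] [NormedSpace ℂ X] {f g : P.T →L[ℂ] X}
    (h : ∀ a b, f (P.tmul a b) = g (P.tmul a b)) (t : P.T) : f t = g t := by
  obtain ⟨u, v, -, hs, -⟩ := P.exists_rep t 1 one_pos
  have hf : HasSum (fun n => f (P.tmul (u n) (v n))) (f t) := f.hasSum hs
  have hg : HasSum (fun n => g (P.tmul (u n) (v n))) (g t) := g.hasSum hs
  simp only [h] at hf
  exact hf.unique hg

theorem ProjTensorSquare.flip_flip (P : ProjTensorSquare A) (t : P.T) :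
    P.flip (P.flip t) = t := by
  have := P.ext_tmul (f := P.flip.comp P.flip) (g := ContinuousLinearMap.id ℂ P.T)
    (fun a b => by simp [P.flip_tmul]) t
  simpa using this

theorem ProjTensorSquare.flip_lmul (P : ProjTensorSquare A)
    (hcomm : ∀ a b : A, a * b = b * a) (a : A) (t : P.T) :
    P.flip (P.lmul a t) = P.rmul a (P.flip t) := by
  exact P.ext_tmul (f := P.flip.comp (P.lmul a)) (g := (P.rmul a).comp P.flip)
    (fun b c => by simp [P.flip_tmul, P.lmul_tmul, P.rmul_tmul, hcomm a b]) t

theorem ProjTensorSquare.flip_rmul (P : ProjTensorSquare A)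
    (hcomm : ∀ a b : A, a * b = b * a) (a : A) (t : P.T) :
    P.flip (P.rmul a t) = P.lmul a (P.flip t) := by
  exact P.ext_tmul (f := P.flip.comp (P.rmul a)) (g := (P.lmul a).comp P.flip)
    (fun b c => by simp [P.flip_tmul, P.lmul_tmul, P.rmul_tmul, hcomm a c]) t

theorem ProjTensorSquare.π_flip (P : ProjTensorSquare A)
    (hcomm : ∀ a b : A, a * b = b * a) (t : P.T) :
    P.π (P.flip t) = P.π t := by
  exact P.ext_tmul (f := P.π.comp P.flip) (g := P.π)
    (fun b c => by simp [P.flip_tmul, P.π_tmul, hcomm b c]) t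

end Aux

/-- Every commutative pseudo-amenable Banach algebra is symmetrically
pseudo-amenable. -/
theorem symmPseudoAmenable_of_commutative_pseudoAmenable {A : Type u} [NonUnitalNormedRing A]
    [NormedSpace ℂ A] [IsScalarTower ℂ A A] [SMulCommClass ℂ A A] [CompleteSpace A]
    (hcomm : ∀ a b : A, a * b = b * a) (P : ProjTensorSquare A)
    (h : P.PseudoAmenable) : P.SymmPseudoAmenable := by
  obtain ⟨ι, l, t, hne, hdiag, hπ⟩ := h
  refine ⟨ι, l, fun i => (2⁻¹ : ℂ) • (t i + P.flip (t i)), hne, ?_, ?_, ?_⟩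
  · intro i
    simp only [map_smul, map_add, P.flip_flip]
    rw [add_comm]
  · intro a
    have key : ∀ i, P.lmul a ((2⁻¹ : ℂ) • (t i + P.flip (t i))) -
        P.rmul a ((2⁻¹ : ℂ) • (t i + P.flip (t i))) =
        (2⁻¹ : ℂ) • ((P.lmul a (t i) - P.rmul a (t i)) -
          P.flip (P.lmul a (t i) - P.rmul a (t i))) := by
      intro i
      simp only [map_smul, map_add, map_sub, P.flip_lmul hcomm, P.flip_rmul hcomm]
      rw [← smul_sub]
      congr 1
      abel
    simp only [key]
    have h1 := hdiag a
    have h2 : Tendsto (fun i => P.flip (P.lmul a (t i) - P.rmul a (t i))) l (𝓝 0) := by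
      have := (P.flip.continuous.tendsto 0).comp h1
      simpa [Function.comp_def, map_sub] using this
    have := (h1.sub h2).const_smul (2⁻¹ : ℂ)
    simpa using this
  · intro a
    have key : ∀ i, P.π ((2⁻¹ : ℂ) • (t i + P.flip (t i))) * a = P.π (t i) * a := by
      intro i
      simp only [map_smul, map_add, P.π_flip hcomm]
      rw [← two_smul ℂ, smul_smul, smul_mul_assoc]
      norm_num
    simp only [key]
    exact hπ a
end

section
/- If 𝔘 is a symmetrically pseudo-amenable Banach algebra and J is a closed two-sided ideal of 𝔘 with a bounded approximate identity, then J is symmetrically pseudo-amenable. -/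
open Filter Topology

universe u

/-! Let `tᵢ` be a symmetric approximate diagonal of `A` and `e_β` a bounded approximate identity
of `J`, `‖e_β‖ ≤ C`. Sandwiching by `w ∈ J`, `a ⊗ b ↦ w a ⊗ b w`, maps `A ⊗̂ A` into `J ⊗̂ J`,
and the symmetric parts of the sandwiches of `tᵢ` by `e_β` form a symmetric approximate diagonal
of `J` along the iterated limit "first `i`, then `β`". The commutator with `x ∈ J` is bounded by
`C² (1 + ‖flip_J‖ ‖flip_A‖) ‖x tᵢ - tᵢ x‖` plus a multiple of `‖x e_β - e_β x‖ ‖tᵢ‖`, and for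
fixed `i` the second term vanishes as `β → ∞`. Likewise `π(·) x` tends to `π(tᵢ) x` as `β → ∞`
(checked on elementary tensors, then extended by dominated convergence along a projective
representation of `tᵢ`), and `π(tᵢ) x → x` as `i → ∞`. -/

noncomputable instance NonUnitalSubalgebra.toNormedSpace {𝕜 E : Type*} [NormedField 𝕜]
    [NonUnitalSeminormedRing E] [NormedSpace 𝕜 E] (J : NonUnitalSubalgebra 𝕜 E) :
    NormedSpace 𝕜 J :=
  SubmoduleClass.toNormedSpace (R := 𝕜) J

instance Filter.curry_neBot {α β : Type*} {la : Filter α} {lb : Filter β} [la.NeBot]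
    [lb.NeBot] : (la.curry lb).NeBot := by
  simp [← frequently_true_iff_neBot, frequently_curry_iff]

theorem Filter.Tendsto.curry_of_forall_tendsto {α β X : Type*} [PseudoMetricSpace X]
    {la : Filter α} {lb : Filter β} {f : α × β → X} {g : α → X} {c : X}
    (hg : Tendsto g la (𝓝 c)) (hf : ∀ a, Tendsto (fun b => f (a, b)) lb (𝓝 (g a))) :
    Tendsto f (la.curry lb) (𝓝 c) := by
  refine Metric.tendsto_nhds.mpr fun ε hε => eventually_curry_iff.mpr ?_
  filter_upwards [Metric.tendsto_nhds.mp hg (ε / 2) (half_pos hε)] with a ha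
  filter_upwards [Metric.tendsto_nhds.mp (hf a) (ε / 2) (half_pos hε)] with b hb
  calc dist (f (a, b)) c ≤ dist (f (a, b)) (g a) + dist (g a) c := dist_triangle _ _ _
    _ < ε := by linarith

theorem Filter.Tendsto.bdd_mul_of_tendsto_mul {R ι : Type*} [NonUnitalSeminormedRing R]
    {l : Filter ι} {e f : ι → R} {y : R} {C : ℝ} (hf : Tendsto f l (𝓝 y))
    (hC : ∀ i, ‖e i‖ ≤ C) (he : Tendsto (fun i => e i * y) l (𝓝 y)) :
    Tendsto (fun i => e i * f i) l (𝓝 y) := by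
  have hsmall : Tendsto (fun i => e i * (f i - y)) l (𝓝 0) :=
    isBoundedUnder_le_mul_tendsto_zero (isBoundedUnder_of ⟨C, hC⟩)
      (tendsto_sub_nhds_zero_iff.mpr hf)
  simpa [mul_sub] using hsmall.add he

namespace ProjTensorSquare

section General

variable {A : Type u} [NonUnitalNormedRing A] [NormedSpace ℂ A]
    [IsScalarTower ℂ A A] [SMulCommClass ℂ A A] [CompleteSpace A] (P : ProjTensorSquare A)

theorem ext_tmul_s8 {X : Type*} [NormedAddCommGroup X] [NormedSpace ℂ X] {g₁ g₂ : P.T →L[ℂ] X}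
    (h : ∀ a b, g₁ (P.tmul a b) = g₂ (P.tmul a b)) : g₁ = g₂ := by
  ext τ
  obtain ⟨u, v, -, hτ, -⟩ := P.exists_rep τ 1 one_pos
  exact (hτ.mapL g₁).unique (by simpa only [h] using hτ.mapL g₂)

theorem tendsto_apply_of_tendsto_tmul {X : Type*} [NormedAddCommGroup X] [NormedSpace ℂ X]
    [CompleteSpace X] {ι : Type*} {l : Filter ι} {F : ι → P.T →L[ℂ] X} {G : P.T →L[ℂ] X}
    {M : ℝ} (hM : ∀ i, ‖F i‖ ≤ M)
    (hF : ∀ a b, Tendsto (fun i => F i (P.tmul a b)) l (𝓝 (G (P.tmul a b)))) (τ : P.T) :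
    Tendsto (fun i => F i τ) l (𝓝 (G τ)) := by
  obtain ⟨u, v, hsummable, hτ, -⟩ := P.exists_rep τ 1 one_pos
  have hbound : ∀ i n, ‖F i (P.tmul (u n) (v n))‖ ≤ M * (‖u n‖ * ‖v n‖) := fun i n =>
    calc ‖F i (P.tmul (u n) (v n))‖ ≤ ‖F i‖ * ‖P.tmul (u n) (v n)‖ := (F i).le_opNorm _
      _ ≤ M * (‖u n‖ * ‖v n‖) :=
        mul_le_mul (hM i) (P.norm_tmul_le _ _) (norm_nonneg _) ((norm_nonneg _).trans (hM i))
  have hlim := tendsto_tsum_of_dominated_convergence (hsummable.mul_left M) (fun n => hF _ _)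
    (Eventually.of_forall (hbound ·))
  rwa [(hτ.mapL G).tsum_eq, funext fun i => (hτ.mapL (F i)).tsum_eq] at hlim

theorem flip_flip_s8 (τ : P.T) : P.flip (P.flip τ) = τ := by
  have : P.flip.comp P.flip = .id ℂ P.T := P.ext_tmul_s8 fun a b => by simp [P.flip_tmul]
  exact congr($this τ)

theorem π_flip_s8 (τ : P.T) : P.π (P.flip τ) = P.πop τ := by
  have : P.π.comp P.flip = P.πop :=
    P.ext_tmul_s8 fun a b => by simp [P.flip_tmul, P.π_tmul, P.πop_tmul]
  exact congr($this τ)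

noncomputable def commutator (a : A) : P.T →L[ℂ] P.T := P.lmul a - P.rmul a

theorem commutator_apply (a : A) (τ : P.T) : P.commutator a τ = P.lmul a τ - P.rmul a τ := rfl

noncomputable def circCommutator (a : A) : P.T →L[ℂ] P.T := P.lcirc a - P.rcirc a

theorem commutator_flip (a : A) (τ : P.T) :
    P.commutator a (P.flip τ) = P.flip (P.circCommutator a τ) := by
  have : (P.commutator a).comp P.flip = P.flip.comp (P.circCommutator a) :=
    P.ext_tmul_s8 fun b c => by
      simp [commutator, circCommutator, P.flip_tmul, P.lmul_tmul, P.rmul_tmul, P.lcirc_tmul,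
        P.rcirc_tmul]
  exact congr($this τ)

theorem circCommutator_of_flip_eq {τ : P.T} (hτ : P.flip τ = τ) (a : A) :
    P.circCommutator a τ = P.flip (P.commutator a τ) := by
  have : P.flip.comp (P.commutator a) = (P.circCommutator a).comp P.flip :=
    P.ext_tmul_s8 fun b c => by
      simp [commutator, circCommutator, P.flip_tmul, P.lmul_tmul, P.rmul_tmul, P.lcirc_tmul,
        P.rcirc_tmul]
  simpa only [ContinuousLinearMap.comp_apply, hτ] using congr($this τ).symm

noncomputable def symmetrize (τ : P.T) : P.T := (2⁻¹ : ℂ) • (τ + P.flip τ)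

theorem flip_symmetrize (τ : P.T) : P.flip (P.symmetrize τ) = P.symmetrize τ := by
  rw [symmetrize, map_smul, map_add, flip_flip_s8, add_comm]

theorem π_symmetrize (τ : P.T) :
    P.π (P.symmetrize τ) = (2⁻¹ : ℂ) • (P.π τ + P.πop τ) := by
  rw [symmetrize, map_smul, map_add, π_flip_s8]

theorem commutator_symmetrize (a : A) (τ : P.T) :
    P.commutator a (P.symmetrize τ) =
      (2⁻¹ : ℂ) • (P.commutator a τ + P.flip (P.circCommutator a τ)) := by
  rw [symmetrize, map_smul, map_add, commutator_flip]

end General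

section Map

variable {A B : Type u} [NonUnitalNormedRing A] [NormedSpace ℂ A]
    [IsScalarTower ℂ A A] [SMulCommClass ℂ A A] [CompleteSpace A]
    [NonUnitalNormedRing B] [NormedSpace ℂ B]
    [IsScalarTower ℂ B B] [SMulCommClass ℂ B B] [CompleteSpace B]
    (P : ProjTensorSquare A) (Q : ProjTensorSquare B)

noncomputable def map (φ ψ : A →L[ℂ] B) : P.T →L[ℂ] Q.T :=
  (P.lift (Q.tmul.bilinearComp φ ψ)).choose

theorem map_tmul (φ ψ : A →L[ℂ] B) (a b : A) :
    P.map Q φ ψ (P.tmul a b) = Q.tmul (φ a) (ψ b) :=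
  (P.lift _).choose_spec.1 a b

theorem norm_map_le (φ ψ : A →L[ℂ] B) : ‖P.map Q φ ψ‖ ≤ ‖φ‖ * ‖ψ‖ :=
  (P.lift _).choose_spec.2.trans <| ContinuousLinearMap.opNorm_le_bound₂ _ (by positivity)
    fun a b => calc ‖Q.tmul (φ a) (ψ b)‖ ≤ ‖φ a‖ * ‖ψ b‖ := Q.norm_tmul_le _ _
      _ ≤ ‖φ‖ * ‖a‖ * (‖ψ‖ * ‖b‖) := by gcongr <;> apply ContinuousLinearMap.le_opNorm
      _ = ‖φ‖ * ‖ψ‖ * ‖a‖ * ‖b‖ := by ring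

end Map

end ProjTensorSquare

namespace NonUnitalSubalgebra

variable {𝕜 A : Type*} [NontriviallyNormedField 𝕜] [NonUnitalSeminormedRing A] [NormedSpace 𝕜 A]
    (J : NonUnitalSubalgebra 𝕜 A)

section MulLeft

variable [SMulCommClass 𝕜 A A] (hJr : ∀ a x : A, x ∈ J → x * a ∈ J)

noncomputable def mulLeftCLM (y : J) : A →L[𝕜] J :=
  LinearMap.mkContinuous
    { toFun := fun a => ⟨y * a, hJr a y y.2⟩
      map_add' := fun _ _ => Subtype.ext (mul_add _ _ _)
      map_smul' := fun c a => Subtype.ext (mul_smul_comm c (y : A) a) }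
    ‖y‖ fun a => norm_mul_le (y : A) a

@[simp]
theorem coe_mulLeftCLM (y : J) (a : A) :
    (J.mulLeftCLM hJr y a : A) = y * a := rfl

theorem norm_mulLeftCLM_le (y : J) :
    ‖J.mulLeftCLM hJr y‖ ≤ ‖y‖ :=
  LinearMap.mkContinuous_norm_le _ (norm_nonneg y) _

end MulLeft

section MulRight

variable [IsScalarTower 𝕜 A A] (hJl : ∀ a x : A, x ∈ J → a * x ∈ J)

noncomputable def mulRightCLM (y : J) : A →L[𝕜] J :=
  LinearMap.mkContinuous
    { toFun := fun a => ⟨a * y, hJl a y y.2⟩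
      map_add' := fun _ _ => Subtype.ext (add_mul _ _ _)
      map_smul' := fun c a => Subtype.ext (smul_mul_assoc c a (y : A)) }
    ‖y‖ fun a => (norm_mul_le a (y : A)).trans_eq (mul_comm _ _)

@[simp]
theorem coe_mulRightCLM (y : J) (a : A) :
    (J.mulRightCLM hJl y a : A) = a * y := rfl

theorem norm_mulRightCLM_le (y : J) :
    ‖J.mulRightCLM hJl y‖ ≤ ‖y‖ :=
  LinearMap.mkContinuous_norm_le _ (norm_nonneg y) _

end MulRight

end NonUnitalSubalgebra

namespace ProjTensorSquare

variable {A : Type u} [NonUnitalNormedRing A] [NormedSpace ℂ A]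
    [IsScalarTower ℂ A A] [SMulCommClass ℂ A A] [CompleteSpace A]
    {J : NonUnitalSubalgebra ℂ A} [CompleteSpace J] (P : ProjTensorSquare A)
    (PJ : ProjTensorSquare J) (hJl : ∀ a x : A, x ∈ J → a * x ∈ J)
    (hJr : ∀ a x : A, x ∈ J → x * a ∈ J)

noncomputable def sandwich (w : J) : P.T →L[ℂ] PJ.T :=
  P.map PJ (J.mulLeftCLM hJr w) (J.mulRightCLM hJl w)

theorem norm_sandwich_le (w : J) : ‖P.sandwich PJ hJl hJr w‖ ≤ ‖w‖ * ‖w‖ :=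
  (P.norm_map_le PJ _ _).trans <|
    mul_le_mul (J.norm_mulLeftCLM_le hJr w) (J.norm_mulRightCLM_le hJl w) (norm_nonneg _)
      (norm_nonneg _)

theorem commutator_sandwich (x w : J) (τ : P.T) :
    PJ.commutator x (P.sandwich PJ hJl hJr w τ) =
      P.sandwich PJ hJl hJr w (P.commutator x τ) +
        (P.map PJ (J.mulLeftCLM hJr (x * w - w * x)) (J.mulRightCLM hJl w) τ +
          P.map PJ (J.mulLeftCLM hJr w) (J.mulRightCLM hJl (x * w - w * x)) τ) := by
  have : (PJ.commutator x).comp (P.sandwich PJ hJl hJr w) =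
      (P.sandwich PJ hJl hJr w).comp (P.commutator x) +
        (P.map PJ (J.mulLeftCLM hJr (x * w - w * x)) (J.mulRightCLM hJl w) +
          P.map PJ (J.mulLeftCLM hJr w) (J.mulRightCLM hJl (x * w - w * x))) :=
    P.ext_tmul_s8 fun a b => by
      have hl : x * J.mulLeftCLM hJr w a =
          J.mulLeftCLM hJr w (x * a) + J.mulLeftCLM hJr (x * w - w * x) a :=
        Subtype.ext <| by
          simp only [MulMemClass.coe_mul, AddMemClass.coe_add, AddSubgroupClass.coe_sub,
            NonUnitalSubalgebra.coe_mulLeftCLM]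
          noncomm_ring
      have hr : J.mulRightCLM hJl w b * x =
          J.mulRightCLM hJl w (b * x) - J.mulRightCLM hJl (x * w - w * x) b :=
        Subtype.ext <| by
          simp only [MulMemClass.coe_mul, AddSubgroupClass.coe_sub,
            NonUnitalSubalgebra.coe_mulRightCLM]
          noncomm_ring
      simp only [sandwich, commutator, ContinuousLinearMap.comp_apply, add_apply, sub_apply,
        map_tmul, P.lmul_tmul, P.rmul_tmul, PJ.lmul_tmul, PJ.rmul_tmul, hl, hr, map_add, map_sub]
      abel
  exact congr($this τ)

theorem circCommutator_sandwich (x w : J) (τ : P.T) :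
    PJ.circCommutator x (P.sandwich PJ hJl hJr w τ) =
      P.sandwich PJ hJl hJr w (P.circCommutator x τ) := by
  have : (PJ.circCommutator x).comp (P.sandwich PJ hJl hJr w) =
      (P.sandwich PJ hJl hJr w).comp (P.circCommutator x) := P.ext_tmul_s8 fun a b => by
    have hl : x * J.mulRightCLM hJl w b = J.mulRightCLM hJl w (x * b) :=
      Subtype.ext (mul_assoc ..).symm
    have hr : J.mulLeftCLM hJr w a * x = J.mulLeftCLM hJr w (a * x) := Subtype.ext (mul_assoc ..)
    simp [sandwich, circCommutator, map_tmul, PJ.lcirc_tmul, PJ.rcirc_tmul, P.lcirc_tmul,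
      P.rcirc_tmul, hl, hr]
  exact congr($this τ)

theorem norm_commutator_symmetrize_sandwich_le (x w : J) {τ : P.T} (hτ : P.flip τ = τ) :
    ‖PJ.commutator x (PJ.symmetrize (P.sandwich PJ hJl hJr w τ))‖ ≤
      (1 + ‖PJ.flip‖ * ‖P.flip‖) * (‖w‖ * ‖w‖) * ‖P.commutator x τ‖ +
        2 * ‖w‖ * ‖x * w - w * x‖ * ‖τ‖ := by
  set c := P.commutator x τ
  set d := x * w - w * x
  set θ := P.sandwich PJ hJl hJr w
  set D₁ := P.map PJ (J.mulLeftCLM hJr d) (J.mulRightCLM hJl w) τ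
  set D₂ := P.map PJ (J.mulLeftCLM hJr w) (J.mulRightCLM hJl d) τ
  have hθ : ∀ σ, ‖θ σ‖ ≤ ‖w‖ * ‖w‖ * ‖σ‖ :=
    θ.le_of_opNorm_le (P.norm_sandwich_le PJ hJl hJr w)
  have hD₁ : ‖D₁‖ ≤ ‖d‖ * ‖w‖ * ‖τ‖ := ContinuousLinearMap.le_of_opNorm_le _
    ((P.norm_map_le PJ _ _).trans (mul_le_mul (J.norm_mulLeftCLM_le hJr d)
      (J.norm_mulRightCLM_le hJl w) (norm_nonneg _) (norm_nonneg _))) τ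
  have hD₂ : ‖D₂‖ ≤ ‖w‖ * ‖d‖ * ‖τ‖ := ContinuousLinearMap.le_of_opNorm_le _
    ((P.norm_map_le PJ _ _).trans (mul_le_mul (J.norm_mulLeftCLM_le hJr w)
      (J.norm_mulRightCLM_le hJl d) (norm_nonneg _) (norm_nonneg _))) τ
  have hflip : ‖PJ.flip (θ (P.flip c))‖ ≤ ‖PJ.flip‖ * (‖w‖ * ‖w‖ * (‖P.flip‖ * ‖c‖)) :=
    (PJ.flip.le_opNorm _).trans <| by
      gcongr; exact (hθ _).trans (by gcongr; exact P.flip.le_opNorm c)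
  rw [commutator_symmetrize, commutator_sandwich, circCommutator_sandwich,
    circCommutator_of_flip_eq P hτ]
  calc ‖(2⁻¹ : ℂ) • (θ c + (D₁ + D₂) + PJ.flip (θ (P.flip c)))‖
      ≤ ‖θ c‖ + ‖D₁ + D₂‖ + ‖PJ.flip (θ (P.flip c))‖ := by
        rw [norm_smul]
        exact (mul_le_of_le_one_left (norm_nonneg _) (by norm_num)).trans norm_add₃_le
    _ ≤ _ := by nlinarith [hθ c, norm_add_le D₁ D₂, norm_nonneg d, norm_nonneg w, norm_nonneg τ]

section Convergence

variable {ι : Type*} {l : Filter ι} {e : ι → J} {C : ℝ}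

theorem tendsto_sandwich_apply_of_tendsto_tmul (hC : ∀ i, ‖e i‖ ≤ C) {X : Type*}
    [NormedAddCommGroup X] [NormedSpace ℂ X] [CompleteSpace X] (L : PJ.T →L[ℂ] X)
    {G : P.T →L[ℂ] X}
    (hG : ∀ a b, Tendsto (fun i => L (P.sandwich PJ hJl hJr (e i) (P.tmul a b))) l
      (𝓝 (G (P.tmul a b))))
    (τ : P.T) : Tendsto (fun i => L (P.sandwich PJ hJl hJr (e i) τ)) l (𝓝 (G τ)) :=
  P.tendsto_apply_of_tendsto_tmul (F := fun i => L.comp (P.sandwich PJ hJl hJr (e i)))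
    (M := ‖L‖ * (C * C)) (fun i => (L.opNorm_comp_le _).trans <| by
      gcongr
      exact (P.norm_sandwich_le PJ hJl hJr _).trans
        (mul_le_mul (hC i) (hC i) (norm_nonneg _) ((norm_nonneg _).trans (hC i)))) hG τ

theorem tendsto_π_symmetrize_sandwich_mul (hC : ∀ i, ‖e i‖ ≤ C)
    (hleft : ∀ x : J, Tendsto (fun i => e i * x) l (𝓝 x)) {τ : P.T} (hτ : P.flip τ = τ)
    (x : J) :
    Tendsto (fun i => PJ.π (PJ.symmetrize (P.sandwich PJ hJl hJr (e i) τ)) * x) l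
      (𝓝 (J.mulRightCLM hJl x (P.π τ))) := by
  have hleftA : ∀ {y : A} (hy : y ∈ J), Tendsto (fun i => (e i : A) * y) l (𝓝 y) :=
    fun hy => tendsto_subtype_rng.mp (hleft ⟨_, hy⟩)
  have hπ := P.tendsto_sandwich_apply_of_tendsto_tmul PJ hJl hJr (l := l) hC
    (((ContinuousLinearMap.mul ℂ J).flip x).comp PJ.π) (G := (J.mulRightCLM hJl x).comp P.π)
    (fun a b => by
      simp only [sandwich, ContinuousLinearMap.comp_apply, map_tmul, P.π_tmul, PJ.π_tmul,
        ContinuousLinearMap.flip_apply, ContinuousLinearMap.mul_apply']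
      refine tendsto_subtype_rng.mpr ?_
      have h := (((hleftA x.2).const_mul b).const_mul a).bdd_mul_of_tendsto_mul hC
        (hleftA (hJl a _ (hJl b _ x.2)))
      simpa [mul_assoc] using h) τ
  have hπop := P.tendsto_sandwich_apply_of_tendsto_tmul PJ hJl hJr (l := l) hC
    (((ContinuousLinearMap.mul ℂ J).flip x).comp PJ.πop) (G := (J.mulRightCLM hJl x).comp P.πop)
    (fun a b => by
      simp only [sandwich, ContinuousLinearMap.comp_apply, map_tmul, P.πop_tmul, PJ.πop_tmul,
        ContinuousLinearMap.flip_apply, ContinuousLinearMap.mul_apply']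
      refine tendsto_subtype_rng.mpr ?_
      have h := ((hleftA (hJl a _ x.2)).bdd_mul_of_tendsto_mul hC
        (hleftA (hJl a _ x.2))).const_mul b
      simpa [mul_assoc] using h) τ
  rw [ContinuousLinearMap.comp_apply, ← π_flip_s8, hτ] at hπop
  simpa [π_symmetrize, smul_mul_assoc, add_mul, ← two_smul ℂ] using
    (hπ.add hπop).const_smul (2⁻¹ : ℂ)

noncomputable def idealDiagonal {ιA : Type*} (t : ιA → P.T) (e : ι → J) (i : ιA × ι) : PJ.T :=
  PJ.symmetrize (P.sandwich PJ hJl hJr (e i.2) (t i.1))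

variable {ιA : Type u} {lA : Filter ιA} {t : ιA → P.T}

theorem tendsto_commutator_idealDiagonal (ht : P.IsSymmApproxDiagonal lA t)
    (hC : ∀ i, ‖e i‖ ≤ C) (hleft : ∀ x : J, Tendsto (fun i => e i * x) l (𝓝 x))
    (hright : ∀ x : J, Tendsto (fun i => x * e i) l (𝓝 x)) (x : J) :
    Tendsto (fun i => PJ.commutator x (P.idealDiagonal PJ hJl hJr t e i)) (lA.curry l) (𝓝 0) := by
  set K := 1 + ‖PJ.flip‖ * ‖P.flip‖
  have hbound : ∀ i : ιA × ι, ‖PJ.commutator x (P.idealDiagonal PJ hJl hJr t e i)‖ ≤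
      K * (C * C) * ‖P.commutator x (t i.1)‖ + 2 * C * ‖x * e i.2 - e i.2 * x‖ * ‖t i.1‖ :=
    fun i => (P.norm_commutator_symmetrize_sandwich_le PJ hJl hJr x (e i.2) (ht.1 i.1)).trans <| by
      have hC₀ : 0 ≤ C := (norm_nonneg _).trans (hC i.2)
      gcongr <;> exact hC i.2
  have hd : Tendsto (fun i => x * e i - e i * x) l (𝓝 0) := by
    simpa using (hright x).sub (hleft x)
  have hc : Tendsto (fun α => K * (C * C) * ‖P.commutator x (t α)‖) lA (𝓝 0) := by
    simpa [commutator_apply] using (ht.2.1 x).norm.const_mul (K * (C * C))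
  refine squeeze_zero_norm hbound (hc.curry_of_forall_tendsto fun α => ?_)
  simpa using tendsto_const_nhds.add ((hd.norm.const_mul (2 * C)).mul_const ‖t α‖)

theorem tendsto_π_idealDiagonal_mul (ht : P.IsSymmApproxDiagonal lA t) (hC : ∀ i, ‖e i‖ ≤ C)
    (hleft : ∀ x : J, Tendsto (fun i => e i * x) l (𝓝 x)) (x : J) :
    Tendsto (fun i => PJ.π (P.idealDiagonal PJ hJl hJr t e i) * x) (lA.curry l) (𝓝 x) :=
  Tendsto.curry_of_forall_tendsto (g := fun α => J.mulRightCLM hJl x (P.π (t α)))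
    (tendsto_subtype_rng.mpr (ht.2.2 x))
    fun α => P.tendsto_π_symmetrize_sandwich_mul PJ hJl hJr hC hleft (ht.1 α) x

end Convergence

end ProjTensorSquare

/-- If `𝔘` is a symmetrically pseudo-amenable Banach algebra and `J` is a closed
two-sided ideal of `𝔘` with a bounded approximate identity, then `J` is symmetrically
pseudo-amenable. -/
theorem symmPseudoAmenable_ideal_of_bai {A : Type u} [NonUnitalNormedRing A] [NormedSpace ℂ A]
    [IsScalarTower ℂ A A] [SMulCommClass ℂ A A] [CompleteSpace A]
    (P : ProjTensorSquare A) (h : P.SymmPseudoAmenable)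
    (J : NonUnitalSubalgebra ℂ A)
    (hJl : ∀ a x : A, x ∈ J → a * x ∈ J) (hJr : ∀ a x : A, x ∈ J → x * a ∈ J)
    (hJc : IsClosed (J : Set A))
    {ι : Type u} (l : Filter ι) [l.NeBot] (e : ι → J)
    (happrox : ∀ x : J, Tendsto (fun i => e i * x) l (𝓝 x) ∧
      Tendsto (fun i => x * e i) l (𝓝 x))
    (hbdd : ∃ C : ℝ, ∀ i, ‖e i‖ ≤ C)
    (PJ : @ProjTensorSquare J _ (SubmoduleClass.toNormedSpace (𝕜 := ℂ) (R := ℂ) J) _ _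
      hJc.completeSpace_coe) :
    @ProjTensorSquare.SymmPseudoAmenable J _ (SubmoduleClass.toNormedSpace (𝕜 := ℂ) (R := ℂ) J)
      _ _ hJc.completeSpace_coe PJ := by
  obtain ⟨ιA, lA, t, hlA, ht⟩ := h
  obtain ⟨C, hC⟩ := hbdd
  have := hJc.completeSpace_coe
  exact ⟨ιA × ι, lA.curry l, P.idealDiagonal PJ hJl hJr t e, inferInstance,
    fun _ => PJ.flip_symmetrize _,
    P.tendsto_commutator_idealDiagonal PJ hJl hJr ht hC (fun x => (happrox x).1)
      fun x => (happrox x).2,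
    P.tendsto_π_idealDiagonal_mul PJ hJl hJr ht hC fun x => (happrox x).1⟩
end
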